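/- Let G be a finite multigraph and T a subset of its vertices. Then G contains a T-join (a subgraph J with OddV(J) = T, where OddV(J) is the set of vertices of odd degree in J) if and only if every connected component of G contains an even number of vertices of T. -/

import Mathlib

open Finset
open scoped Classical

/-- A multigraph on vertex type `V` with edge index type `E`: each edge `e` has two
distinct endpoints given as an unordered pair `ends e` (no loops, multiple edges allowed). -/
structure Multigraph (V : Type) (E : Type) where
  ends : E → Sym2 V
  no_loops : ∀ e, ¬ (ends e).IsDiag

namespace Multigraph

variable {V E : Type} [Fintype V] [Fintype E]

/-- The number of edges from the edge set `F` incident with `v`. -/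
noncomputable def degIn (G : Multigraph V E) (F : Finset E) (v : V) : ℕ :=
  (F.filter (fun e => v ∈ G.ends e)).card

/-- The degree of `v` in `G`. -/
noncomputable def deg (G : Multigraph V E) (v : V) : ℕ := G.degIn Finset.univ v

/-- The underlying simple graph of `G`. -/
def simple (G : Multigraph V E) : SimpleGraph V where
  Adj x y := x ≠ y ∧ ∃ e : E, G.ends e = s(x, y)
  symm := by
    refine ⟨?_⟩
    rintro x y ⟨hxy, e, he⟩
    exact ⟨hxy.symm, e, by rw [he, Sym2.eq_swap]⟩
  loopless := ⟨fun x h => h.1 rfl⟩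

/-- `C` is the vertex set of a connected component of the subgraph of `G` induced by `S`. -/
def IsComponentOf (G : Multigraph V E) (S : Set V) (C : Finset V) : Prop :=
  ∃ v ∈ S, ∀ x : V, x ∈ C ↔
    Relation.ReflTransGen (fun a b => a ∈ S ∧ b ∈ S ∧ (G.simple).Adj a b) v x

/-- The number of edges of `G` with one endpoint in `U₁` and the other in `U₂`. -/
noncomputable def eBetween (G : Multigraph V E) (U₁ U₂ : Finset V) : ℕ :=
  (Finset.univ.filter (fun e : E => ∃ x ∈ U₁, ∃ y ∈ U₂, G.ends e = s(x, y))).card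

/-- The set of vertices of `G` of odd degree. -/
noncomputable def oddVerts (G : Multigraph V E) : Finset V :=
  Finset.univ.filter (fun v => Odd (G.deg v))

/-- The set of vertices of `G` of even degree. -/
noncomputable def evenVerts (G : Multigraph V E) : Finset V :=
  Finset.univ.filter (fun v => Even (G.deg v))

/-- `F` forms an odd subgraph: every vertex incident with an edge of `F` has odd `F`-degree. -/
def IsOddSet (G : Multigraph V E) (F : Finset E) : Prop :=
  ∀ v : V, (∃ e ∈ F, v ∈ G.ends e) → Odd (G.degIn F v)

/-- `F` forms an even subgraph: every vertex has even `F`-degree. -/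
def IsEvenSet (G : Multigraph V E) (F : Finset E) : Prop :=
  ∀ v : V, Even (G.degIn F v)

end Multigraph

open Multigraph

/-! Degree parity is additive under symmetric difference of edge sets, so the odd-vertex set of
`F ∆ F'` is the symmetric difference of those of `F` and `F'`. A single edge has its two ends as odd
vertices, and they lie in one component; hence every odd-vertex set meets every component in an
even number of vertices. Conversely, if `T` does, pick `u ≠ v` of `T` in one component, take the
edges of a `u`–`v` walk (mod 2) to get odd-vertex set `{u, v}`, and recurse on `T \ {u, v}`. -/

open scoped symmDiff

theorem Finset.filter_symmDiff {α : Type*} [DecidableEq α] (p : α → Prop) [DecidablePred p]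
    (s t : Finset α) : (s ∆ t).filter p = s.filter p ∆ t.filter p := by
  ext; simp only [mem_filter, mem_symmDiff]; tauto

theorem Finset.card_symmDiff_add_two_mul_card_inter {α : Type*} [DecidableEq α]
    (s t : Finset α) : #(s ∆ t) + 2 * #(s ∩ t) = #s + #t := by
  rw [symmDiff_eq_sup_sdiff_inf, sup_eq_union, inf_eq_inter,
    card_sdiff_of_subset inter_subset_union, ← card_union_add_card_inter]
  have := card_le_card (inter_subset_union (s := s) (t := t))
  omega

theorem Finset.even_card_symmDiff_iff {α : Type*} [DecidableEq α] (s t : Finset α) :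
    Even #(s ∆ t) ↔ (Even #s ↔ Even #t) := by
  rw [← Nat.even_add, ← card_symmDiff_add_two_mul_card_inter]
  simp [Nat.even_add]

namespace SimpleGraph

variable {V : Type} (H : SimpleGraph V)

def EvenOnComponents (T : Finset V) : Prop :=
  ∀ c : H.ConnectedComponent, Even #(T.filter (H.connectedComponentMk · = c))

variable {H}

theorem evenOnComponents_empty : H.EvenOnComponents ∅ := by
  simp [EvenOnComponents]

theorem EvenOnComponents.symmDiff {S T : Finset V} (hS : H.EvenOnComponents S)
    (hT : H.EvenOnComponents T) : H.EvenOnComponents (S ∆ T) := fun c => by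
  rw [filter_symmDiff, even_card_symmDiff_iff]
  exact iff_of_true (hS c) (hT c)

theorem evenOnComponents_symmDiff_singleton {u v : V} (h : H.Reachable u v) :
    H.EvenOnComponents ({u} ∆ {v}) := by
  intro c
  rw [filter_symmDiff, even_card_symmDiff_iff, filter_singleton, filter_singleton,
    ConnectedComponent.eq.2 h]
  split_ifs <;> simp

theorem EvenOnComponents.exists_ne_reachable {T : Finset V} (hT : H.EvenOnComponents T)
    {u : V} (hu : u ∈ T) : ∃ v ∈ T, v ≠ u ∧ H.Reachable u v := by
  set C := T.filter (H.connectedComponentMk · = H.connectedComponentMk u)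
  have huC : u ∈ C := mem_filter.2 ⟨hu, rfl⟩
  have hC : 1 < #C := by
    obtain ⟨k, hk⟩ : Even #C := hT _
    have := card_pos.2 ⟨u, huC⟩
    omega
  obtain ⟨v, hvC, hvu⟩ := exists_mem_ne hC u
  obtain ⟨hvT, hv⟩ := mem_filter.1 hvC
  exact ⟨v, hvT, hvu, ConnectedComponent.exact hv.symm⟩

end SimpleGraph

namespace Multigraph

variable {V E : Type} (G : Multigraph V E)

theorem exists_ends_eq_adj (e : E) : ∃ a b, G.ends e = s(a, b) ∧ G.simple.Adj a b := by
  induction h : G.ends e using Sym2.ind with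
  | h a b => exact ⟨a, b, rfl, fun hab => G.no_loops e (by simp [h, hab]), e, h⟩

variable [Fintype V]

noncomputable def oddVertsIn (F : Finset E) : Finset V :=
  univ.filter fun v => Odd (G.degIn F v)

@[simp]
theorem mem_oddVertsIn {F : Finset E} {v : V} : v ∈ G.oddVertsIn F ↔ Odd (G.degIn F v) := by
  simp [oddVertsIn]

@[simp]
theorem oddVertsIn_empty : G.oddVertsIn ∅ = ∅ := by
  ext; simp [degIn]

theorem oddVertsIn_symmDiff (F F' : Finset E) :
    G.oddVertsIn (F ∆ F') = G.oddVertsIn F ∆ G.oddVertsIn F' := by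
  ext v
  have := even_card_symmDiff_iff (F.filter (v ∈ G.ends ·)) (F'.filter (v ∈ G.ends ·))
  simp only [mem_oddVertsIn, mem_symmDiff, degIn, filter_symmDiff, ← Nat.not_even_iff_odd]
    at this ⊢
  tauto

theorem oddVertsIn_singleton {e : E} {a b : V} (he : G.ends e = s(a, b)) :
    G.oddVertsIn {e} = {a} ∆ {b} := by
  have hab : a ≠ b := fun h => G.no_loops e (by simp [he, h])
  ext v
  simp only [mem_oddVertsIn, degIn, filter_singleton, he, Sym2.mem_iff, mem_symmDiff,
    mem_singleton]
  split_ifs <;> grind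

-- `{u} ∆ {v}` rather than `{u, v}`: for `u = v` the empty walk has no odd vertices.
theorem exists_oddVertsIn_eq_of_reachable {u v : V} (h : G.simple.Reachable u v) :
    ∃ F : Finset E, G.oddVertsIn F = {u} ∆ {v} := by
  obtain ⟨p⟩ := h
  induction p with
  | nil => exact ⟨∅, by simp⟩
  | @cons a b c hab _ ih =>
    obtain ⟨F, hF⟩ := ih
    obtain ⟨-, e, he⟩ := hab
    refine ⟨{e} ∆ F, ?_⟩
    rw [oddVertsIn_symmDiff, oddVertsIn_singleton G he, hF, symmDiff_assoc,
      symmDiff_symmDiff_cancel_left]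

theorem evenOnComponents_oddVertsIn (F : Finset E) :
    G.simple.EvenOnComponents (G.oddVertsIn F) := by
  induction F using Finset.induction_on with
  | empty => simpa using SimpleGraph.evenOnComponents_empty
  | insert e F he ih =>
    obtain ⟨a, b, hab, hadj⟩ := G.exists_ends_eq_adj e
    rw [insert_eq, ← symmDiff_eq_union (disjoint_singleton_left.2 he), oddVertsIn_symmDiff,
      oddVertsIn_singleton G hab]
    exact (SimpleGraph.evenOnComponents_symmDiff_singleton hadj.reachable).symmDiff ih

theorem exists_oddVertsIn_eq_of_evenOnComponents {T : Finset V}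
    (hT : G.simple.EvenOnComponents T) : ∃ F : Finset E, G.oddVertsIn F = T := by
  induction T using Finset.strongInduction with
  | H T ih =>
  obtain rfl | ⟨u, hu⟩ := T.eq_empty_or_nonempty
  · exact ⟨∅, G.oddVertsIn_empty⟩
  obtain ⟨v, hv, hvu, huv⟩ := hT.exists_ne_reachable hu
  have hsub : T ∆ ({u} ∆ {v}) ⊂ T := by
    rw [ssubset_iff_of_subset (fun x => by simp only [mem_symmDiff]; grind)]
    exact ⟨u, hu, by simp [mem_symmDiff, hu, hvu.symm]⟩
  obtain ⟨F, hF⟩ := ih _ hsub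
    (hT.symmDiff (SimpleGraph.evenOnComponents_symmDiff_singleton huv))
  obtain ⟨P, hP⟩ := G.exists_oddVertsIn_eq_of_reachable huv
  exact ⟨F ∆ P, by rw [oddVertsIn_symmDiff, hF, hP, symmDiff_symmDiff_cancel_right]⟩

theorem exists_oddVertsIn_eq_iff (T : Finset V) :
    (∃ F : Finset E, G.oddVertsIn F = T) ↔ G.simple.EvenOnComponents T :=
  ⟨fun ⟨F, hF⟩ => hF ▸ G.evenOnComponents_oddVertsIn F,
    G.exists_oddVertsIn_eq_of_evenOnComponents⟩

end Multigraph

theorem stmt3_general {V E : Type} [Fintype V] (G : Multigraph V E) (T : Finset V) :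
    (∃ J : Finset E, ∀ v : V, (Odd (G.degIn J v) ↔ v ∈ T)) ↔
    ∀ c : G.simple.ConnectedComponent,
      Even (Nat.card {v : V // v ∈ T ∧ G.simple.connectedComponentMk v = c}) := by
  have hcard (c : G.simple.ConnectedComponent) :
      Nat.card {v : V // v ∈ T ∧ G.simple.connectedComponentMk v = c}
        = #(T.filter (G.simple.connectedComponentMk · = c)) := by
    rw [← Nat.card_eq_finsetCard]
    simp only [mem_filter]
  simp only [hcard, ← Multigraph.mem_oddVertsIn, ← Finset.ext_iff]
  exact G.exists_oddVertsIn_eq_iff T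

theorem stmt3 {V E : Type} [Fintype V] [Fintype E] (G : Multigraph V E) (T : Finset V) :
    (∃ J : Finset E, ∀ v : V, (Odd (G.degIn J v) ↔ v ∈ T)) ↔
    ∀ c : G.simple.ConnectedComponent,
      Even (Nat.card {v : V // v ∈ T ∧ G.simple.connectedComponentMk v = c}) :=
  stmt3_general G T
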